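/- If G is an NT_k group and G = A × B is a direct product of two nontrivial subgroups, then G is nilpotent of class at most k. -/

import Mathlib

variable {G : Type*} [Group G]

/-- A subgroup is `nil_k`: nilpotent of class at most `k` (i.e. γ_{k+1} = 1). -/
def SubNilK (k : ℕ) (H : Subgroup G) : Prop := (⊤ : Subgroup H).lowerCentralSeries k = ⊥

/-- A subgroup `H ≤ G` is malnormal: `H ∩ g⁻¹Hg = 1` for all `g ∉ H`. -/
def Malnormal (H : Subgroup G) : Prop :=
  ∀ g ∉ H, ∀ y ∈ H, g * y * g⁻¹ ∈ H → y = 1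

/-- `H` is a maximal nil_k subgroup of `G`. -/
def MaxNilK (k : ℕ) (H : Subgroup G) : Prop :=
  SubNilK k H ∧ ∀ K : Subgroup G, SubNilK k K → H ≤ K → K = H

/-- `G` is NT_k: any two nil_k subgroups with nontrivial intersection generate
a nil_k subgroup. -/
def IsNTk (k : ℕ) (G : Type*) [Group G] : Prop :=
  ∀ K₁ K₂ : Subgroup G, SubNilK k K₁ → SubNilK k K₂ → K₁ ⊓ K₂ ≠ ⊥ →
    SubNilK k (K₁ ⊔ K₂)

/-- `G` is CSN_k: every maximal nil_k subgroup is malnormal. -/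
def IsCSNk (k : ℕ) (G : Type*) [Group G] : Prop :=
  ∀ H : Subgroup G, MaxNilK k H → Malnormal H

/-- `C^k_G(x) = { y : ⟨x, y⟩ is nilpotent of class at most k }`. -/
def CkSet (k : ℕ) (x : G) : Set G :=
  { y | SubNilK k (Subgroup.closure {x, y}) }

/-- If all elements of `H` commute, then `H` is nil_k for positive `k`. -/
lemma subNilK_of_comm {k : ℕ} (hk : 0 < k) (H : Subgroup G)
    (h : ∀ x y : H, Commute x y) : SubNilK k H := by
  have h1 : (⊤ : Subgroup H).lowerCentralSeries 1 = ⊥ := by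
    rw [eq_bot_iff, ← zero_add (1 : ℕ), Subgroup.lowerCentralSeries_succ, Subgroup.commutator_def]
    apply (Subgroup.closure_le _).2
    rintro x ⟨p, -, q, -, rfl⟩
    have hc : p * q = q * p := h p q
    have : p * q * p⁻¹ * q⁻¹ = 1 := by rw [hc]; group
    simp only [SetLike.mem_coe, Subgroup.mem_bot, commutatorElement_def]; exact this
  have := Subgroup.lowerCentralSeries_antitone (⊤ : Subgroup H) hk
  rw [h1] at this
  exact le_bot_iff.mp this

/-- The closure of two commuting elements is nil_k. -/
lemma subNilK_closure_pair {k : ℕ} (hk : 0 < k) {x y : G} (h : Commute x y) :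
    SubNilK k (Subgroup.closure {x, y}) := by
  apply subNilK_of_comm hk
  have hsub : ({x, y} : Set G) ⊆ (Subgroup.centralizer {x, y} : Subgroup G) := by
    rintro z (rfl | rfl) <;> rw [SetLike.mem_coe, Subgroup.mem_centralizer_iff] <;>
      rintro w (rfl | rfl) <;> simp [h.eq]
  have hle : Subgroup.closure ({x, y} : Set G) ≤ Subgroup.centralizer {x, y} :=
    (Subgroup.closure_le _).2 hsub
  have hle2 := Subgroup.closure_le_centralizer_centralizer ({x, y} : Set G)
  rintro ⟨u, hu⟩ ⟨v, hv⟩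
  have hu' := hle2 hu
  rw [Subgroup.mem_centralizer_iff] at hu'
  have : v * u = u * v := hu' v (hle hv)
  exact Subtype.ext this.symm

/-- Monotonicity of the mapped lower central series along subgroup inclusions. -/
lemma lcs_map_mono {H₁ H₂ : Subgroup G} (h : H₁ ≤ H₂) (n : ℕ) :
    ((⊤ : Subgroup H₁).lowerCentralSeries n).map H₁.subtype ≤
      ((⊤ : Subgroup H₂).lowerCentralSeries n).map H₂.subtype := by
  rw [Subgroup.top_subtype_lowerCentralSeries, Subgroup.top_subtype_lowerCentralSeries]
  induction n with
  | zero => exact h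
  | succ n ih => exact Subgroup.commutator_mono ih h

/-- The union of a directed family of subgroups is a subgroup. -/
def dirUnion (P : Subgroup G → Prop) (hne : ∃ H, P H)
    (hdir : ∀ ⦃H₁ H₂⦄, P H₁ → P H₂ → ∃ H₃, P H₃ ∧ H₁ ≤ H₃ ∧ H₂ ≤ H₃) : Subgroup G where
  carrier := { g | ∃ H, P H ∧ g ∈ H }
  one_mem' := by obtain ⟨H, hH⟩ := hne; exact ⟨H, hH, one_mem H⟩
  mul_mem' := by
    rintro x y ⟨H₁, h₁, hx⟩ ⟨H₂, h₂, hy⟩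
    obtain ⟨H₃, h₃, l₁, l₂⟩ := hdir h₁ h₂
    exact ⟨H₃, h₃, mul_mem (l₁ hx) (l₂ hy)⟩
  inv_mem' := by rintro x ⟨H, hH, hx⟩; exact ⟨H, hH, inv_mem hx⟩

lemma mem_dirUnion {P : Subgroup G → Prop} {hne hdir} {g : G} :
    g ∈ dirUnion P hne hdir ↔ ∃ H, P H ∧ g ∈ H := Iff.rfl

/-- Local approximation of the lower central series by a directed covering family. -/
lemma lcs_local (P : Subgroup G → Prop) (hne : ∃ H, P H)
    (hdir : ∀ ⦃H₁ H₂⦄, P H₁ → P H₂ → ∃ H₃, P H₃ ∧ H₁ ≤ H₃ ∧ H₂ ≤ H₃)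
    (hcov : ∀ g : G, ∃ H, P H ∧ g ∈ H) :
    ∀ n, ∀ g ∈ (⊤ : Subgroup G).lowerCentralSeries n,
      ∃ H, P H ∧ g ∈ ((⊤ : Subgroup H).lowerCentralSeries n).map H.subtype := by
  intro n
  induction n with
  | zero =>
    intro g _
    obtain ⟨H, hH, hg⟩ := hcov g
    refine ⟨H, hH, ?_⟩
    rw [Subgroup.lowerCentralSeries_zero, ← MonoidHom.range_eq_map, Subgroup.range_subtype]
    exact hg
  | succ n ih =>
    -- the candidate union subgroup at level n+1
    set Pn : Subgroup G → Prop :=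
      fun K => ∃ H, P H ∧ K = ((⊤ : Subgroup H).lowerCentralSeries (n + 1)).map H.subtype with hPn
    have hne' : ∃ K, Pn K := by
      obtain ⟨H, hH⟩ := hne; exact ⟨_, H, hH, rfl⟩
    have hdir' : ∀ ⦃K₁ K₂⦄, Pn K₁ → Pn K₂ → ∃ K₃, Pn K₃ ∧ K₁ ≤ K₃ ∧ K₂ ≤ K₃ := by
      rintro K₁ K₂ ⟨H₁, h₁, rfl⟩ ⟨H₂, h₂, rfl⟩
      obtain ⟨H₃, h₃, l₁, l₂⟩ := hdir h₁ h₂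
      exact ⟨_, ⟨H₃, h₃, rfl⟩, lcs_map_mono l₁ _, lcs_map_mono l₂ _⟩
    have key : (⊤ : Subgroup G).lowerCentralSeries (n + 1) ≤ dirUnion Pn hne' hdir' := by
      rw [Subgroup.lowerCentralSeries_succ, Subgroup.commutator_def]
      apply (Subgroup.closure_le _).2
      rintro x ⟨p, hp, q, -, rfl⟩
      obtain ⟨H₁, h₁, hp'⟩ := ih p hp
      obtain ⟨H₂, h₂, hq⟩ := hcov q
      obtain ⟨H₃, h₃, l₁, l₂⟩ := hdir h₁ h₂
      have hp3 : p ∈ ((⊤ : Subgroup H₃).lowerCentralSeries n).map H₃.subtype := lcs_map_mono l₁ n hp'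
      obtain ⟨p', hp'', rfl⟩ := hp3
      refine ⟨_, ⟨H₃, h₃, rfl⟩, ⟨p' * ⟨q, l₂ hq⟩ * p'⁻¹ * (⟨q, l₂ hq⟩ : H₃)⁻¹, ?_, by simp [commutatorElement_def]⟩⟩
      rw [Subgroup.lowerCentralSeries_succ, Subgroup.commutator_def]
      exact Subgroup.subset_closure ⟨p', hp'', ⟨q, l₂ hq⟩, Subgroup.mem_top _, commutatorElement_def _ _⟩
    intro g hg
    obtain ⟨K, ⟨H, hH, rfl⟩, hgK⟩ := key hg
    exact ⟨H, hH, hgK⟩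

theorem stmt2 (k : ℕ) (hk : 0 < k) {G : Type*} [Group G] (hNT : IsNTk k G)
    (A B : Subgroup G) (hA : A ≠ ⊥) (hB : B ≠ ⊥)
    (hcomm : ∀ a ∈ A, ∀ b ∈ B, Commute a b)
    (hinf : A ⊓ B = ⊥) (hsup : A ⊔ B = ⊤) :
    (⊤ : Subgroup G).lowerCentralSeries k = ⊥ := by
  rw [Subgroup.ne_bot_iff_exists_ne_one] at hA hB
  obtain ⟨⟨a, haA⟩, ha⟩ := hA
  obtain ⟨⟨b, hbB⟩, hb⟩ := hB
  have ha1 : a ≠ 1 := fun h => ha (Subtype.ext h)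
  have hb1 : b ≠ 1 := fun h => hb (Subtype.ext h)
  have hab : Commute a b := hcomm a haA b hbB
  set P : Subgroup G → Prop := fun H => SubNilK k H ∧ a ∈ H with hP
  have hmem_pair : ∀ x y : G, x ∈ Subgroup.closure {x, y} ∧ y ∈ Subgroup.closure {x, y} :=
    fun x y => ⟨Subgroup.subset_closure (Or.inl rfl), Subgroup.subset_closure (Or.inr rfl)⟩
  have hne : ∃ H, P H :=
    ⟨Subgroup.closure {a, b}, subNilK_closure_pair hk hab, (hmem_pair a b).1⟩
  have hdir : ∀ ⦃H₁ H₂⦄, P H₁ → P H₂ → ∃ H₃, P H₃ ∧ H₁ ≤ H₃ ∧ H₂ ≤ H₃ := by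
    rintro H₁ H₂ ⟨n₁, m₁⟩ ⟨n₂, m₂⟩
    have hlat : H₁ ⊓ H₂ ≠ ⊥ := fun h => ha1 (by
      have : a ∈ H₁ ⊓ H₂ := ⟨m₁, m₂⟩
      rwa [h, Subgroup.mem_bot] at this)
    exact ⟨H₁ ⊔ H₂, ⟨hNT H₁ H₂ n₁ n₂ hlat, Subgroup.mem_sup_left m₁⟩, le_sup_left, le_sup_right⟩
  have hcov : ∀ g : G, ∃ H, P H ∧ g ∈ H := by
    intro g
    have hAle : A ≤ dirUnion P hne hdir := by
      intro a' ha'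
      have hab' : Commute a' b := hcomm a' ha' b hbB
      have n₁ := subNilK_closure_pair hk hab
      have n₂ := subNilK_closure_pair hk hab'
      have hlat : Subgroup.closure {a, b} ⊓ Subgroup.closure {a', b} ≠ ⊥ := fun h => hb1 (by
        have : b ∈ Subgroup.closure {a, b} ⊓ Subgroup.closure {a', b} :=
          ⟨(hmem_pair a b).2, (hmem_pair a' b).2⟩
        rwa [h, Subgroup.mem_bot] at this)
      refine ⟨_, ⟨hNT _ _ n₁ n₂ hlat, Subgroup.mem_sup_left (hmem_pair a b).1⟩,
        Subgroup.mem_sup_right (hmem_pair a' b).1⟩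
    have hBle : B ≤ dirUnion P hne hdir := by
      intro b' hb'
      have hab' : Commute a b' := hcomm a haA b' hb'
      exact ⟨_, ⟨subNilK_closure_pair hk hab', (hmem_pair a b').1⟩, (hmem_pair a b').2⟩
    have : (⊤ : Subgroup G) ≤ dirUnion P hne hdir := hsup ▸ sup_le hAle hBle
    exact this (Subgroup.mem_top g)
  rw [eq_bot_iff]
  intro g hg
  obtain ⟨H, ⟨hHnil, -⟩, hg'⟩ := lcs_local P hne hdir hcov k g hg
  rw [hHnil, Subgroup.map_bot] at hg'
  exact hg'
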